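/- Let J be a maximal tubing of C_n. For every vertex x, cut_J(J↓(x)) equals the smallest tube of Cut(J) containing x; that is, the Cut map sends the downset of x in the G-tree of J to the downset of x in the G-tree of Cut(J). -/

import Mathlib

open Finset

section TubingDefs

variable {n : ℕ}

/-- A tube of a graph: a nonempty vertex subset inducing a connected subgraph. -/
def IsTube (G : SimpleGraph (Fin n)) (X : Finset (Fin n)) : Prop :=
  X.Nonempty ∧ (G.induce (X : Set (Fin n))).Connected

/-- Tubes are compatible if nested or with disconnected union. -/
def TubeCompatible (G : SimpleGraph (Fin n)) (X Y : Finset (Fin n)) : Prop :=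
  X ⊆ Y ∨ Y ⊆ X ∨ ¬ IsTube G (X ∪ Y)

def IsTubing (G : SimpleGraph (Fin n)) (T : Finset (Finset (Fin n))) : Prop :=
  (∀ X ∈ T, IsTube G X) ∧ ∀ X ∈ T, ∀ Y ∈ T, TubeCompatible G X Y

def IsMaxTubing (G : SimpleGraph (Fin n)) (T : Finset (Finset (Fin n))) : Prop :=
  IsTubing G T ∧ ∀ T', IsTubing G T' → T ⊆ T' → T' = T

/-- The smallest tube of `T` containing `x`: the intersection of all tubes of `T`
containing `x`. -/
def tubingDown (T : Finset (Finset (Fin n))) (x : Fin n) : Finset (Fin n) :=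
  Finset.univ.filter (fun y => ∀ X ∈ T, x ∈ X → y ∈ X)

/-- The G-tree order of a tubing: `x ≤_T y` iff `x` lies in the smallest tube containing `y`. -/
def treeLE (T : Finset (Finset (Fin n))) (x y : Fin n) : Prop :=
  x ∈ tubingDown T y

/-- `y` covers `x` in the G-tree order of `T`. -/
def TreeCovBy (T : Finset (Finset (Fin n))) (x y : Fin n) : Prop :=
  treeLE T x y ∧ x ≠ y ∧ ∀ z, treeLE T x z → treeLE T z y → z = x ∨ z = y

/-- Flip cover relation on maximal tubings: exchange exactly one tube, with the
top (least-nested) element of the exchanged tube increasing. -/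
def FlipCover (G : SimpleGraph (Fin n)) (T J : Finset (Finset (Fin n))) : Prop :=
  IsMaxTubing G T ∧ IsMaxTubing G J ∧
  ∃ X Y, X ∈ T ∧ Y ∈ J ∧ X ≠ Y ∧ T.erase X = J.erase Y ∧
    ∃ x y : Fin n, tubingDown T x = X ∧ tubingDown J y = Y ∧ x < y

/-- The order of the poset of maximal tubings, generated by flip covers. -/
def MTubLE (G : SimpleGraph (Fin n)) :
    Finset (Finset (Fin n)) → Finset (Finset (Fin n)) → Prop :=
  Relation.ReflTransGen (FlipCover G)

/-- Inversions: pairs `i < j` with `j <_T i` in the G-tree. -/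
def invSet (T : Finset (Finset (Fin n))) : Set (Fin n × Fin n) :=
  {p | p.1 < p.2 ∧ treeLE T p.2 p.1}

/-- Coinversions: pairs `i < j` with `i <_T j` in the G-tree. -/
def coinvSet (T : Finset (Finset (Fin n))) : Set (Fin n × Fin n) :=
  {p | p.1 < p.2 ∧ treeLE T p.1 p.2}

/-- Incomparable pairs `i < j` of the G-tree. -/
def incSet (T : Finset (Finset (Fin n))) : Set (Fin n × Fin n) :=
  {p | p.1 < p.2 ∧ ¬ treeLE T p.1 p.2 ∧ ¬ treeLE T p.2 p.1}

/-- The cut of the tube `J↓(x)`, where `m` is the root of the G-tree of `J`. -/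
def cutTube (J : Finset (Finset (Fin n))) (m x : Fin n) : Finset (Fin n) :=
  if x = m then tubingDown J x
  else if x < m then (tubingDown J x).filter (fun y => y < m)
  else (tubingDown J x).filter (fun y => m < y)

/-- The Cut map on maximal tubings of the cycle. -/
def CutTubing (J : Finset (Finset (Fin n))) (m : Fin n) : Finset (Finset (Fin n)) :=
  Finset.image (cutTube J m) Finset.univ

/-- Inversions of a word: pairs `i < j` such that `j` appears before `i`. -/
def listInvSet (w : List (Fin n)) : Set (Fin n × Fin n) :=
  {p | p.1 < p.2 ∧ p.1 ∈ w ∧ p.2 ∈ w ∧ w.idxOf p.2 < w.idxOf p.1}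

end TubingDefs

/-- The path graph `1 - 2 - ⋯ - n`. -/
def pathGraph (n : ℕ) : SimpleGraph (Fin n) :=
  SimpleGraph.fromRel (fun a b => (a : ℕ) + 1 = (b : ℕ))

/-- The cycle graph `1 - 2 - ⋯ - n - 1`. -/
def cycleGraph (n : ℕ) : SimpleGraph (Fin n) :=
  SimpleGraph.fromRel (fun a b => (a : ℕ) + 1 = (b : ℕ) ∨ ((a : ℕ) = 0 ∧ (b : ℕ) = n - 1))

/-!
`Cut(J)↓(x)` is the least tube of `Cut(J)` containing `x`. The tube `cut_J(J↓(x))` belongs to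
`Cut(J)` and contains `x`, and it lies in every `cut_J(J↓(z))` containing `x`: then `J↓(x) ⊆ J↓(z)`,
and both tubes are cut down to the same side of the root `m` (or `J↓(z)` is the whole cycle).
-/

section TubingDown

variable {n : ℕ} {T : Finset (Finset (Fin n))} {S : Finset (Fin n)} {x y : Fin n}

@[simp]
theorem mem_tubingDown : y ∈ tubingDown T x ↔ ∀ X ∈ T, x ∈ X → y ∈ X := by
  simp [tubingDown]

theorem self_mem_tubingDown (T : Finset (Finset (Fin n))) (x : Fin n) : x ∈ tubingDown T x :=
  mem_tubingDown.2 fun _ _ hx ↦ hx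

theorem tubingDown_subset_of_mem (h : y ∈ tubingDown T x) : tubingDown T y ⊆ tubingDown T x :=
  fun _ hz ↦ mem_tubingDown.2 fun X hX hxX ↦ mem_tubingDown.1 hz X hX (mem_tubingDown.1 h X hX hxX)

theorem tubingDown_eq_of_isLeast (hS : S ∈ T) (hxS : x ∈ S) (hleast : ∀ X ∈ T, x ∈ X → S ⊆ X) :
    tubingDown T x = S :=
  Subset.antisymm (fun _ hy ↦ mem_tubingDown.1 hy S hS hxS)
    fun _ hy ↦ mem_tubingDown.2 fun X hX hxX ↦ hleast X hX hxX hy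

end TubingDown

section CutTube

variable {n : ℕ} {J : Finset (Finset (Fin n))} {m x z : Fin n}

theorem cutTube_of_lt (h : x < m) : cutTube J m x = (tubingDown J x).filter (· < m) := by
  simp [cutTube, h.ne, h]

theorem cutTube_of_gt (h : m < x) : cutTube J m x = (tubingDown J x).filter (m < ·) := by
  simp [cutTube, h.ne', h.not_gt]

theorem self_mem_cutTube (J : Finset (Finset (Fin n))) (m x : Fin n) : x ∈ cutTube J m x := by
  rcases lt_trichotomy x m with h | rfl | h
  · exact cutTube_of_lt h ▸ mem_filter.2 ⟨self_mem_tubingDown J x, h⟩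
  · simp [cutTube]
  · exact cutTube_of_gt h ▸ mem_filter.2 ⟨self_mem_tubingDown J x, h⟩

theorem cutTube_subset_of_mem (hm : tubingDown J m = univ) (hx : x ∈ cutTube J m z) :
    cutTube J m x ⊆ cutTube J m z := by
  rcases lt_trichotomy z m with hz | rfl | hz
  · obtain ⟨hxz, hxm⟩ := mem_filter.1 (cutTube_of_lt (J := J) hz ▸ hx)
    rw [cutTube_of_lt hxm, cutTube_of_lt hz]
    exact filter_subset_filter _ (tubingDown_subset_of_mem hxz)
  · simp [cutTube, hm]
  · obtain ⟨hxz, hmx⟩ := mem_filter.1 (cutTube_of_gt (J := J) hz ▸ hx)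
    rw [cutTube_of_gt hmx, cutTube_of_gt hz]
    exact filter_subset_filter _ (tubingDown_subset_of_mem hxz)

end CutTube

theorem cut_downsets_general (n : ℕ) (J : Finset (Finset (Fin n))) (m : Fin n)
    (hm : tubingDown J m = Finset.univ) :
    ∀ x : Fin n, cutTube J m x = tubingDown (CutTubing J m) x := by
  intro x
  refine (tubingDown_eq_of_isLeast (mem_image_of_mem _ (mem_univ x))
    (self_mem_cutTube J m x) ?_).symm
  simp only [mem_image, mem_univ, true_and, forall_exists_index, forall_apply_eq_imp_iff]
  exact fun z hx ↦ cutTube_subset_of_mem hm hx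

/-- The Cut map takes downsets to downsets: `cut_J(J↓(x)) = Cut(J)↓(x)`. -/
theorem cut_downsets (n : ℕ) (J : Finset (Finset (Fin n))) (m : Fin n)
    (hJ : IsMaxTubing (cycleGraph n) J) (hm : tubingDown J m = Finset.univ) :
    ∀ x : Fin n, cutTube J m x = tubingDown (CutTubing J m) x :=
  cut_downsets_general n J m hm
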